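/- arXiv:2306.09809 — 7 statements merged into one kernel-verified Lean document; each statement's English description precedes it below -/
import Mathlib

section
/- Let I be an independent family of subsets of ℕ. Then I is densely maximal if and only if for every X ⊆ ℕ, either X ∈ fil(I) or there exists h ∈ FF(I) such that X ∩ I^h is finite (i.e. X ⊆* ℕ \ I^h). (The Partition Property characterization of dense maximality.) -/
open Set

/-- A family of subsets of ℕ is *independent* if all its members are infinite and
for all finite disjoint subfamilies `𝒜, ℬ ⊆ I` the set `⋂ 𝒜 \ ⋃ ℬ` is infinite. -/
def Indep (I : Set (Set ℕ)) : Prop :=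
  (∀ A ∈ I, A.Infinite) ∧
  ∀ 𝒜 ℬ : Finset (Set ℕ), ↑𝒜 ⊆ I → ↑ℬ ⊆ I → Disjoint 𝒜 ℬ →
    ((⋂ A ∈ 𝒜, A) \ (⋃ B ∈ ℬ, B)).Infinite

/-- `FF I h` : `h` is a finite partial function from `I` to `2`, coded as a finitely
supported `Option Bool`-valued function whose support consists of members of `I`. -/
def FF (I : Set (Set ℕ)) (h : Set ℕ → Option Bool) : Prop :=
  {A | h A ≠ none}.Finite ∧ ∀ A : Set ℕ, h A ≠ none → A ∈ I

/-- The Boolean combination `I^h` : intersection over the domain of `h` of `A` (if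
`h A = some false`, i.e. `h(A) = 0`) or of its complement (if `h A = some true`). -/
def BC (h : Set ℕ → Option Bool) : Set ℕ :=
  ⋂ A ∈ {A : Set ℕ | h A ≠ none}, (if h A = some false then A else Aᶜ)

/-- `ExtFF h h'` : the finite partial function `h'` extends `h`. -/
def ExtFF (h h' : Set ℕ → Option Bool) : Prop :=
  ∀ (A : Set ℕ) (b : Bool), h A = some b → h' A = some b

/-- `I` is densely maximal: for every infinite `X ⊆ ℕ` and every `h ∈ FF(I)` there is
`h' ⊇ h` in `FF(I)` with `I^{h'} \ X` finite or `I^{h'} ∩ X` finite. -/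
def DenselyMax (I : Set (Set ℕ)) : Prop :=
  ∀ X : Set ℕ, X.Infinite → ∀ h, FF I h →
    ∃ h', FF I h' ∧ ExtFF h h' ∧ ((BC h' \ X).Finite ∨ (BC h' ∩ X).Finite)

/-- The density filter `fil(I)`. -/
def densityFil (I : Set (Set ℕ)) : Set (Set ℕ) :=
  {X | ∀ h, FF I h → ∃ h', FF I h' ∧ ExtFF h h' ∧ (BC h' \ X).Finite}

/-- `I` is a maximal independent family. -/
def MaxIndep (I : Set (Set ℕ)) : Prop :=
  Indep I ∧ ¬ ∃ X : Set ℕ, X.Infinite ∧ X ∉ I ∧ Indep (insert X I)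

/-- A proper filter on ℕ, viewed as a collection of subsets of ℕ. -/
def ProperFilter (F : Set (Set ℕ)) : Prop :=
  ∅ ∉ F ∧ Set.univ ∈ F ∧ (∀ X ∈ F, ∀ Y : Set ℕ, X ⊆ Y → Y ∈ F) ∧
    ∀ X ∈ F, ∀ Y ∈ F, X ∩ Y ∈ F

/-- Every member of `F` has infinite intersection with every Boolean combination of `I`. -/
def DiagProp (I : Set (Set ℕ)) (F : Set (Set ℕ)) : Prop :=
  ∀ X ∈ F, ∀ h, FF I h → (X ∩ BC h).Infinite

/-- `F` is a diagonalization filter for `I` : a proper filter, maximal under inclusion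
among proper filters all of whose members meet every Boolean combination infinitely. -/
def DiagFilter (I F : Set (Set ℕ)) : Prop :=
  ProperFilter F ∧ DiagProp I F ∧
    ∀ G : Set (Set ℕ), ProperFilter G → DiagProp I G → F ⊆ G → G = F

/-- `F` is a P-filter (as a collection of sets): every countable subfamily has a
pseudointersection in `F`. -/
def IsPFilter (F : Set (Set ℕ)) : Prop :=
  ∀ A : ℕ → Set ℕ, (∀ n, A n ∈ F) → ∃ B ∈ F, ∀ n, (B \ A n).Finite

/-- `F` is a Q-filter: every partition of ℕ into finite sets has a semiselector in `F`. -/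
def IsQFilter (F : Set (Set ℕ)) : Prop :=
  ∀ J : ℕ → Set ℕ, (∀ n, (J n).Finite) → (∀ m n, m ≠ n → Disjoint (J m) (J n)) →
    (⋃ n, J n) = Set.univ → ∃ A ∈ F, ∀ n, (A ∩ J n).Subsingleton

/-- An independent family is selective if it is densely maximal and its density filter
is Ramsey (both a P-filter and a Q-filter). -/
def Selective (I : Set (Set ℕ)) : Prop :=
  Indep I ∧ DenselyMax I ∧ IsPFilter (densityFil I) ∧ IsQFilter (densityFil I)

lemma mem_BC {h : Set ℕ → Option Bool} {x : ℕ} :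
    x ∈ BC h ↔ (∀ A, h A = some false → x ∈ A) ∧ (∀ A, h A = some true → x ∉ A) := by
  simp only [BC, mem_iInter, mem_setOf_eq]
  constructor
  · intro hx
    constructor
    · intro A hA
      have := hx A (by simp [hA])
      simpa [hA] using this
    · intro A hA
      have := hx A (by simp [hA])
      simpa [hA] using this
  · rintro ⟨h0, h1⟩ A hA
    cases hb : h A with
    | none => exact absurd hb hA
    | some b =>
      cases b with
      | false => simpa [hb] using h0 A hb
      | true => simpa [hb] using h1 A hb

lemma BC_subset_of_ext {h h' : Set ℕ → Option Bool} (he : ExtFF h h') :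
    BC h' ⊆ BC h := by
  intro x hx
  rw [mem_BC] at hx ⊢
  exact ⟨fun A hA => hx.1 A (he A false hA), fun A hA => hx.2 A (he A true hA)⟩

lemma BC_infinite {I : Set (Set ℕ)} (hI : Indep I) {g : Set ℕ → Option Bool}
    (hg : FF I g) : (BC g).Infinite := by
  classical
  obtain ⟨hfin, hmem⟩ := hg
  have hf0 : {A | g A = some false}.Finite :=
    hfin.subset (by intro A hA; simp only [mem_setOf_eq] at hA ⊢; simp [hA])
  have hf1 : {A | g A = some true}.Finite :=
    hfin.subset (by intro A hA; simp only [mem_setOf_eq] at hA ⊢; simp [hA])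
  have key := hI.2 hf0.toFinset hf1.toFinset
    (by intro A hA
        simp only [Finset.mem_coe, Set.Finite.mem_toFinset, mem_setOf_eq] at hA
        exact hmem A (by simp [hA]))
    (by intro A hA
        simp only [Finset.mem_coe, Set.Finite.mem_toFinset, mem_setOf_eq] at hA
        exact hmem A (by simp [hA]))
    (by rw [Finset.disjoint_left]
        intro A hA hB
        simp only [Set.Finite.mem_toFinset, mem_setOf_eq] at hA hB
        rw [hA] at hB
        exact Bool.false_ne_true (by injection hB))
  have heq : BC g = (⋂ A ∈ hf0.toFinset, A) \ (⋃ B ∈ hf1.toFinset, B) := by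
    ext x
    simp only [mem_BC, mem_diff, mem_iInter, mem_iUnion, Set.Finite.mem_toFinset,
      mem_setOf_eq, not_exists]
  rw [heq]
  exact key

lemma FF_merge {I : Set (Set ℕ)} {h g : Set ℕ → Option Bool} (hh : FF I h) (hg : FF I g) :
    FF I (fun A => match h A with | some b => some b | none => g A) := by
  constructor
  · refine (hh.1.union hg.1).subset ?_
    intro A hA
    simp only [mem_setOf_eq, mem_union] at hA ⊢
    cases hb : h A with
    | some b => exact Or.inl (by simp [hb])
    | none => exact Or.inr (by simpa [hb] using hA)
  · intro A hA
    simp only at hA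
    cases hb : h A with
    | some b => exact hh.2 A (by simp [hb])
    | none => exact hg.2 A (by simpa [hb] using hA)

/-- The Partition Property characterization of dense maximality. -/
theorem statement0 (I : Set (Set ℕ)) (hI : Indep I) :
    DenselyMax I ↔
      ∀ X : Set ℕ, X ∈ densityFil I ∨ ∃ h, FF I h ∧ (X ∩ BC h).Finite := by
  classical
  constructor
  · intro hDM X
    by_cases hXfin : X.Finite
    · exact Or.inr ⟨fun _ => none, ⟨by simp, by simp⟩, hXfin.subset inter_subset_left⟩
    · by_cases hfil : X ∈ densityFil I
      · exact Or.inl hfil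
      · right
        simp only [densityFil, mem_setOf_eq, not_forall] at hfil
        obtain ⟨h, hh, hbad⟩ := hfil
        push_neg at hbad
        obtain ⟨h', hh', hext, hcase⟩ := hDM X hXfin h hh
        rcases hcase with hc | hc
        · exact absurd hc (hbad h' hh' hext)
        · exact ⟨h', hh', by rwa [inter_comm]⟩
  · intro hPP X hXinf h hh
    set Y := X ∪ (BC h)ᶜ with hY
    rcases hPP Y with hfil | ⟨g, hg, hgfin⟩
    · obtain ⟨h', hh', hext, hfin⟩ := hfil h hh
      refine ⟨h', hh', hext, Or.inl (hfin.subset ?_)⟩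
      intro x hx
      refine ⟨hx.1, fun hxY => ?_⟩
      rcases hxY with hxX | hxc
      · exact hx.2 hxX
      · exact hxc (BC_subset_of_ext hext hx.1)
    · have hcompat : ∀ A b b', h A = some b → g A = some b' → b = b' := by
        intro A b b' hA hA'
        by_contra hne
        have hdisj : BC g ⊆ Y := by
          intro x hx
          right
          intro hxh
          rw [mem_BC] at hx hxh
          cases b with
          | false =>
            have hb' : b' = true := by cases b' <;> simp_all
            exact hx.2 A (hb' ▸ hA') (hxh.1 A hA)
          | true =>
            have hb' : b' = false := by cases b' <;> simp_all
            exact hxh.2 A hA (hx.1 A (hb' ▸ hA'))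
        exact BC_infinite hI hg (hgfin.subset fun x hx => ⟨hdisj hx, hx⟩)
      set m : Set ℕ → Option Bool :=
        fun A => match h A with | some b => some b | none => g A with hm
      have hextm : ExtFF h m := by
        intro A b hA
        simp [hm, hA]
      have hextg : ExtFF g m := by
        intro A b hA
        simp only [hm]
        cases hb : h A with
        | none => simp [hb, hA]
        | some b' =>
          have := hcompat A b' b hb hA
          simp [hb, this]
      refine ⟨m, FF_merge hh hg, hextm, Or.inr (hgfin.subset ?_)⟩
      intro x hx
      exact ⟨Or.inl hx.2, BC_subset_of_ext hextg hx.1⟩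
end

section
/- Let κ be a regular uncountable cardinal and let (I_α)_{α<κ} be a continuous increasing chain of independent families of subsets of ℕ (so I_α ⊆ I_β for α ≤ β < κ, and I_β = ⋃_{α<β} I_α for every limit ordinal β < κ). Then fil(⋃_{α<κ} I_α) = ⋃_{α<κ} fil(I_α). -/
open Set

/-!
Suppose `X ∈ fil(⋃ I_α)` but, for every `α < κ`, some condition `h_α ∈ FF(I_α)` has no
extension `h'` with `I^{h'} \ X` finite. Since `κ` is regular and uncountable, the tails of
`κ` form a countably complete filter, so a Δ-system argument yields a root `r` on which
unboundedly many `h_α` agree, while every set outside `dom r` lies in `dom h_α` for only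
boundedly many `α`. Extend `r` to `k` with `I^k \ X` finite; for `α` large, `dom k ⊆ I_α` and
`h_α` is compatible with `k`, so `h_α ∪ k` is an extension of `h_α` that contradicts its choice.
The other inclusion holds because `fil` is monotone in the family.
-/

open Filter Set Cardinal

theorem Filter.countableInterFilter_atTop_of_aleph0_lt_cof {α : Type*} [LinearOrder α]
    (h : ℵ₀ < Order.cof α) : CountableInterFilter (atTop : Filter α) where
  countable_sInter_mem S hS hSl := by
    have : Nonempty α := mk_ne_zero_iff.mp (h.trans_le (Order.cof_le_cardinalMk α)).ne_bot
    by_contra hnot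
    have hcof : IsCofinal (⋃₀ (compl '' S)) := by
      rw [← compl_sInter]
      exact fun a => (frequently_atTop.mp (not_eventually.mp hnot) a).imp fun _ hb => ⟨hb.2, hb.1⟩
    obtain ⟨_, ⟨s, hs, rfl⟩, hs'⟩ :=
      isCofinal_of_isCofinal_sUnion hcof ((hS.image compl).le_aleph0.trans_lt h)
    obtain ⟨a, ha⟩ := mem_atTop_sets.mp (hSl s hs)
    obtain ⟨b, hb, hab⟩ := hs' a
    exact hb (ha b hab)

theorem Cardinal.IsRegular.aleph0_lt_cof_Iio_ord {κ : Cardinal} (hreg : κ.IsRegular)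
    (hunc : ℵ₀ < κ) : ℵ₀ < Order.cof (Iio κ.ord) := by
  rwa [Ordinal.cof_Iio, ← Ordinal.lift_cof, hreg.cof_ord, aleph0_lt_lift]

theorem Filter.exists_delta_root_of_encard_le {ι α : Type*} (n : ℕ) {l : Filter ι} [l.NeBot]
    {f : ι → Set α} (hf : ∀ᶠ i in l, (f i).encard ≤ n) :
    ∃ R : Set α, ∃ l' ≤ l, l'.NeBot ∧ (∀ᶠ i in l', R ⊆ f i) ∧ ∀ a ∉ R, ∀ᶠ i in l', a ∉ f i := by
  induction n generalizing l f with
  | zero =>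
    refine ⟨∅, l, le_rfl, ‹_›, by simp, fun a _ => hf.mono fun i hi => ?_⟩
    simp [encard_eq_zero.mp (nonpos_iff_eq_zero.mp hi)]
  | succ n ih =>
    by_cases hx : ∃ x, ∃ᶠ i in l, x ∈ f i
    · obtain ⟨x, hx⟩ := hx
      have := frequently_iff_neBot.mp hx
      have hxl : ∀ᶠ i in l ⊓ 𝓟 {i | x ∈ f i}, x ∈ f i := mem_inf_of_right (mem_principal_self _)
      have hcard : ∀ᶠ i in l ⊓ 𝓟 {i | x ∈ f i}, (f i \ {x}).encard ≤ n := by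
        filter_upwards [hf.filter_mono inf_le_left, hxl] with i hi hxi
        rw [← encard_sdiff_singleton_add_one hxi] at hi
        exact (ENat.add_le_add_iff_right ENat.one_ne_top).mp (by simpa using hi)
      obtain ⟨R, l', hl', hne, hR, hout⟩ := ih hcard
      refine ⟨insert x R, l', hl'.trans inf_le_left, hne, ?_, fun a ha => ?_⟩
      · filter_upwards [hR, hxl.filter_mono hl'] with i hRi hxi
        exact insert_subset hxi (hRi.trans sdiff_subset)
      · filter_upwards [hout a fun h => ha (mem_insert_of_mem x h)] with i hi hai
        exact hi ⟨hai, fun hax => ha (mem_singleton_iff.mp hax ▸ mem_insert x R)⟩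
    · simp only [not_exists, not_frequently] at hx
      exact ⟨∅, l, le_rfl, ‹_›, by simp, fun a _ => hx a⟩

theorem Filter.exists_delta_root {ι α : Type*} {l : Filter ι} [l.NeBot] [CountableInterFilter l]
    {f : ι → Set α} (hf : ∀ᶠ i in l, (f i).Finite) :
    ∃ R : Set α, ∃ l' ≤ l, l'.NeBot ∧ (∀ᶠ i in l', R ⊆ f i) ∧ ∀ a ∉ R, ∀ᶠ i in l', a ∉ f i := by
  obtain ⟨n, hn⟩ : ∃ n : ℕ, ∃ᶠ i in l, (f i).encard ≤ n := by
    by_contra! h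
    obtain ⟨i, hi, hfin⟩ := ((eventually_countable_forall.mpr h).and hf).exists
    exact (hi _).not_ge hfin.encard_eq_coe.le
  have := frequently_iff_neBot.mp hn
  obtain ⟨R, l', hl', hroot⟩ :=
    exists_delta_root_of_encard_le n (l := l ⊓ 𝓟 {i | (f i).encard ≤ n})
      (mem_inf_of_right (mem_principal_self _))
  exact ⟨R, l', hl'.trans inf_le_left, hroot⟩

theorem ExtFF.BC_subset {g g' : Set ℕ → Option Bool} (H : ExtFF g g') : BC g' ⊆ BC g := by
  simp only [BC, subset_iInter_iff]
  intro A hA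
  obtain ⟨b, hb⟩ := Option.ne_none_iff_exists'.mp hA
  refine (biInter_subset_of_mem (show g' A ≠ none by simp [H A b hb])).trans ?_
  simp [hb, H A b hb]

theorem ExtFF.ne_none {h h' : Set ℕ → Option Bool} (H : ExtFF h h') {A : Set ℕ}
    (hA : h A ≠ none) : h' A ≠ none := by
  obtain ⟨b, hb⟩ := Option.ne_none_iff_exists'.mp hA
  simp [H A b hb]

theorem FF.mono {I J : Set (Set ℕ)} {h : Set ℕ → Option Bool} (hIJ : I ⊆ J) (hh : FF I h) :
    FF J h :=
  ⟨hh.1, fun A hA => hIJ (hh.2 A hA)⟩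

theorem FF.of_extFF {I : Set (Set ℕ)} {h h' : Set ℕ → Option Bool} (hh' : FF I h')
    (H : ExtFF h h') : FF I h :=
  ⟨hh'.1.subset fun _ => H.ne_none, fun _ hA => hh'.2 _ (H.ne_none hA)⟩

theorem FF.or {I : Set (Set ℕ)} {h k : Set ℕ → Option Bool} (hh : FF I h) (hk : FF I k) :
    FF I (fun A => (h A).or (k A)) := by
  have hdom : ∀ A, (h A).or (k A) ≠ none → h A ≠ none ∨ k A ≠ none := by
    intro A; cases h A <;> simp
  exact ⟨(hh.1.union hk.1).subset fun A hA => hdom A hA,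
    fun A hA => (hdom A hA).elim (hh.2 A) (hk.2 A)⟩

theorem extFF_or_left (h k : Set ℕ → Option Bool) : ExtFF h (fun A => (h A).or (k A)) := by
  intro A b hb
  simp [hb]

theorem extFF_or_right {h k : Set ℕ → Option Bool}
    (hc : ∀ A, k A ≠ none → h A = none ∨ h A = k A) : ExtFF k (fun A => (h A).or (k A)) := by
  intro A b hb
  rcases hc A (by simp [hb]) with hA | hA <;> simp [hA, hb]

theorem exists_partial_delta_root {ι : Type*} {l : Filter ι} [l.NeBot]
    [CountableInterFilter l] {h : ι → Set ℕ → Option Bool}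
    (hfin : ∀ᶠ i in l, {A | h i A ≠ none}.Finite) :
    ∃ r, ∃ l' ≤ l, l'.NeBot ∧ (∀ᶠ i in l', ExtFF r (h i)) ∧
      ∀ A, r A = none → ∀ᶠ i in l', h i A = none := by
  obtain ⟨R, l₁, hl₁, hne, hR, hout⟩ := exists_delta_root hfin
  have hRfin : R.Finite := by
    obtain ⟨i, hRi, hi⟩ := (hR.and (hfin.filter_mono hl₁)).exists
    exact hi.subset hRi
  have := hRfin.to_subtype
  obtain ⟨v, hv⟩ : ∃ v : R → Bool, ∃ᶠ i in l₁, ∀ A : R, h i A = some (v A) := by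
    refine frequently_exists.mp (Eventually.frequently (hR.mono fun i hRi => ?_))
    choose v hv using fun A : R => Option.ne_none_iff_exists'.mp (hRi A.2)
    exact ⟨v, hv⟩
  have := frequently_iff_neBot.mp hv
  classical
  refine ⟨fun A => if hA : A ∈ R then some (v ⟨A, hA⟩) else none, _, inf_le_left.trans hl₁,
    this, ?_, fun A hA => ?_⟩
  · filter_upwards [mem_inf_of_right (mem_principal_self _)] with i hi A b hb
    by_cases hA : A ∈ R
    · simp only [dif_pos hA, Option.some.injEq] at hb
      exact hb ▸ hi ⟨A, hA⟩
    · simp [hA] at hb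
  · have hAR : A ∉ R := fun hAR => by simp [hAR] at hA
    filter_upwards [(hout A hAR).filter_mono inf_le_left] with i hi
    simpa using hi

theorem densityFil_mono {I J : Set (Set ℕ)} (hIJ : I ⊆ J) : densityFil I ⊆ densityFil J := by
  classical
  intro X hX h hh
  set h₀ : Set ℕ → Option Bool := fun A => if A ∈ I then h A else none
  have hdom : ∀ A, h₀ A ≠ none → A ∈ I ∧ h A ≠ none := fun A => by
    by_cases hAI : A ∈ I <;> simp [h₀, hAI]
  obtain ⟨h₀', hh₀', hext, hfin⟩ :=
    hX h₀ ⟨hh.1.subset fun A hA => (hdom A hA).2, fun A hA => (hdom A hA).1⟩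
  refine ⟨fun A => (h₀' A).or (h A), (hh₀'.mono hIJ).or hh, extFF_or_right fun A hA => ?_,
    hfin.subset (sdiff_subset_sdiff_left (extFF_or_left _ _).BC_subset)⟩
  by_cases hAI : A ∈ I
  · obtain ⟨b, hb⟩ := Option.ne_none_iff_exists'.mp hA
    exact Or.inr (hb ▸ hext A b (by simp [h₀, hAI, hb]))
  · exact Or.inl (by_contra fun hne => hAI (hh₀'.2 A hne))

theorem frequently_mem_densityFil {ι : Type*} {l : Filter ι} [l.NeBot] [CountableInterFilter l]
    {I : ι → Set (Set ℕ)} {J : Set (Set ℕ)} (hIJ : ∀ i, I i ⊆ J)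
    (hJ : ∀ A ∈ J, ∀ᶠ i in l, A ∈ I i) {X : Set ℕ} (hX : X ∈ densityFil J) :
    ∃ᶠ i in l, X ∈ densityFil (I i) := by
  by_contra! hX'
  choose! h hFF hbad using fun i (hi : X ∉ densityFil (I i)) => by
    simpa [densityFil] using hi
  obtain ⟨r, l', hl', hne, hr, hroot⟩ :=
    exists_partial_delta_root (hX'.mono fun i hi => (hFF i hi).1)
  have hbad' := hX'.filter_mono hl'
  obtain ⟨k, hkJ, hrk, hk⟩ : ∃ k, FF J k ∧ ExtFF r k ∧ (BC k \ X).Finite := by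
    obtain ⟨i, hi, hri⟩ := (hbad'.and hr).exists
    exact hX r (((hFF i hi).mono (hIJ i)).of_extFF hri)
  have hkI : ∀ᶠ i in l', ∀ A ∈ {A | k A ≠ none}, A ∈ I i :=
    (eventually_all_finite hkJ.1).mpr fun A hA => (hJ A (hkJ.2 A hA)).filter_mono hl'
  have hcompat : ∀ᶠ i in l', ∀ A ∈ {A | k A ≠ none}, h i A = none ∨ h i A = k A := by
    refine (eventually_all_finite hkJ.1).mpr fun A _ => ?_
    cases hrA : r A with
    | none => exact (hroot A hrA).mono fun i hi => Or.inl hi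
    | some b => exact hr.mono fun i hi => Or.inr (by rw [hi A b hrA, hrk A b hrA])
  obtain ⟨i, hi, hiI, hic⟩ := (hbad'.and (hkI.and hcompat)).exists
  exact hbad i hi _ ((hFF i hi).or ⟨hkJ.1, hiI⟩) (extFF_or_left _ _)
    (hk.subset (sdiff_subset_sdiff_left (extFF_or_right hic).BC_subset))

theorem statement2_general (κ : Cardinal) (hreg : κ.IsRegular) (hunc : Cardinal.aleph0 < κ)
    (I : Ordinal → Set (Set ℕ))
    (hmono : ∀ α β : Ordinal, α ≤ β → β < κ.ord → I α ⊆ I β) :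
    densityFil (⋃ α < κ.ord, I α) = ⋃ α < κ.ord, densityFil (I α) := by
  have := countableInterFilter_atTop_of_aleph0_lt_cof (hreg.aleph0_lt_cof_Iio_ord hunc)
  have : Nonempty (Iio κ.ord) := ⟨⟨0, hreg.ord_pos⟩⟩
  refine Subset.antisymm (fun X hX => ?_)
    (iUnion₂_subset fun α hα => densityFil_mono (subset_biUnion_of_mem (u := I) hα))
  have hJ : ∀ A ∈ ⋃ α < κ.ord, I α, ∀ᶠ β : Iio κ.ord in atTop, A ∈ I β := by
    intro A hA
    obtain ⟨γ, hγ, hAγ⟩ := mem_iUnion₂.mp hA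
    filter_upwards [eventually_ge_atTop ⟨γ, hγ⟩] with β hβ using hmono γ β hβ β.2 hAγ
  obtain ⟨⟨α, hα⟩, hXα⟩ :=
    (frequently_mem_densityFil (fun β => subset_biUnion_of_mem (u := I) β.2) hJ hX).exists
  exact mem_biUnion hα hXα

theorem statement2 (κ : Cardinal) (hreg : κ.IsRegular) (hunc : Cardinal.aleph0 < κ)
    (I : Ordinal → Set (Set ℕ))
    (hindep : ∀ α < κ.ord, Indep (I α))
    (hmono : ∀ α β : Ordinal, α ≤ β → β < κ.ord → I α ⊆ I β)
    (hcont : ∀ β < κ.ord, Order.IsSuccLimit β → I β = ⋃ α < β, I α) :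
    densityFil (⋃ α < κ.ord, I α) = ⋃ α < κ.ord, densityFil (I α) :=
  statement2_general κ hreg hunc I hmono
end

section
/- For every independent family I of subsets of ℕ, fil(I) = ⋃ { fil(J) : J ⊆ I and J is countable }. -/
open Set

lemma FF_mono {J J' : Set (Set ℕ)} (hJJ : J ⊆ J') {h : Set ℕ → Option Bool}
    (hh : FF J h) : FF J' h :=
  ⟨hh.1, fun A hA => hJJ (hh.2 A hA)⟩

lemma BC_anti {g g' : Set ℕ → Option Bool} (he : ExtFF g g') : BC g' ⊆ BC g := by
  intro x hx
  simp only [BC, mem_iInter, mem_setOf_eq] at hx ⊢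
  intro A hA
  obtain ⟨b, hb⟩ := Option.ne_none_iff_exists'.mp hA
  have hb' := he A b hb
  have hne : g' A ≠ none := by simp [hb']
  have hx' := hx A hne
  rw [hb'] at hx'
  rw [hb]
  exact hx'

lemma FF_countable {J : Set (Set ℕ)} (hJ : J.Countable) :
    {h : Set ℕ → Option Bool | FF J h}.Countable := by
  classical
  have hT : {t : Set (Set ℕ × Bool) | t.Finite ∧ t ⊆ J ×ˢ (univ : Set Bool)}.Countable :=
    Set.countable_setOf_finite_subset (hJ.prod countable_univ)
  set f : (Set ℕ → Option Bool) → Set (Set ℕ × Bool) :=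
    fun h => {p | h p.1 = some p.2} with hf
  have hinj : Function.Injective f := by
    intro h1 h2 heq
    funext A
    have key : ∀ b : Bool, h1 A = some b ↔ h2 A = some b := by
      intro b
      have := Set.ext_iff.mp heq (A, b)
      simpa [hf] using this
    cases e1 : h1 A with
    | none =>
      cases e2 : h2 A with
      | none => rfl
      | some b => exact absurd ((key b).mpr e2) (by simp [e1])
    | some b => exact ((key b).mp e1).symm
  have hsub : {h : Set ℕ → Option Bool | FF J h} ⊆ f ⁻¹' {t | t.Finite ∧ t ⊆ J ×ˢ (univ : Set Bool)} := by
    intro h hh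
    constructor
    · apply (hh.1.prod (finite_univ (α := Bool))).subset
      intro p hp
      exact ⟨by simp [hf] at hp; simp [hp], mem_univ _⟩
    · intro p hp
      simp only [hf, mem_setOf_eq] at hp
      exact ⟨hh.2 p.1 (by simp [hp]), mem_univ _⟩
  exact (hT.preimage hinj).mono hsub

lemma exists_nat_subset_of_finite {Jn : ℕ → Set (Set ℕ)} (hmono : Monotone Jn)
    {s : Set (Set ℕ)} (hs : s.Finite) (hsub : s ⊆ ⋃ n, Jn n) : ∃ n, s ⊆ Jn n := by
  classical
  have hch : ∀ A ∈ s, ∃ n, A ∈ Jn n := fun A hA => mem_iUnion.mp (hsub hA)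
  choose! g hg using hch
  refine ⟨hs.toFinset.sup g, fun A hA => ?_⟩
  exact hmono (Finset.le_sup (hs.mem_toFinset.mpr hA)) (hg A hA)

theorem statement3 (I : Set (Set ℕ)) (hI : Indep I) :
    densityFil I = ⋃ J ∈ {J : Set (Set ℕ) | J ⊆ I ∧ J.Countable}, densityFil J := by
  classical
  ext X
  simp only [mem_iUnion, mem_setOf_eq]
  constructor
  · intro hX
    set F : (Set ℕ → Option Bool) → (Set ℕ → Option Bool) :=
      fun h => if hh : FF I h then Classical.choose (hX h hh) else h with hFdef
    have hFspec : ∀ h, FF I h → FF I (F h) ∧ ExtFF h (F h) ∧ (BC (F h) \ X).Finite := by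
      intro h hh
      have := Classical.choose_spec (hX h hh)
      simp only [hFdef, dif_pos hh]
      exact this
    set Js : ℕ → Set (Set ℕ) := fun n => Nat.rec ∅
      (fun _ Jp => Jp ∪ ⋃ h ∈ {h | FF Jp h}, {A | F h A ≠ none}) n with hJsdef
    have hJsS : ∀ n, Js (n+1) = Js n ∪ ⋃ h ∈ {h | FF (Js n) h}, {A | F h A ≠ none} :=
      fun n => rfl
    have hmono : Monotone Js :=
      monotone_nat_of_le_succ (fun n => by rw [hJsS]; exact subset_union_left)
    have hinv : ∀ n, Js n ⊆ I ∧ (Js n).Countable := by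
      intro n
      induction n with
      | zero => exact ⟨empty_subset _, countable_empty⟩
      | succ n ih =>
        constructor
        · rw [hJsS]
          refine union_subset ih.1 (iUnion₂_subset fun h hh => fun A hA => ?_)
          exact ((hFspec h (FF_mono ih.1 hh)).1).2 A hA
        · rw [hJsS]
          exact ih.2.union ((FF_countable ih.2).biUnion
            (fun h hh => ((hFspec h (FF_mono ih.1 hh)).1).1.countable))
    refine ⟨⋃ n, Js n, ⟨iUnion_subset fun n => (hinv n).1,
      countable_iUnion fun n => (hinv n).2⟩, ?_⟩
    intro h hh
    obtain ⟨N, hN⟩ := exists_nat_subset_of_finite hmono hh.1 hh.2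
    have hhN : FF (Js N) h := ⟨hh.1, fun A hA => hN hA⟩
    have hhI : FF I h := FF_mono (hinv N).1 hhN
    obtain ⟨h1, h2, h3⟩ := hFspec h hhI
    refine ⟨F h, ⟨h1.1, fun A hA => ?_⟩, h2, h3⟩
    refine mem_iUnion.mpr ⟨N + 1, ?_⟩
    rw [hJsS]
    exact Or.inr (mem_iUnion₂.mpr ⟨h, hhN, hA⟩)
  · rintro ⟨J, ⟨hJI, _⟩, hXJ⟩
    intro h hh
    set hJ : Set ℕ → Option Bool := fun A => if A ∈ J then h A else none with hJdef
    have hFFJ : FF J hJ := by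
      constructor
      · refine hh.1.subset fun A hA => ?_
        simp only [hJdef, mem_setOf_eq] at hA ⊢
        intro hc
        apply hA
        simp [hc]
      · intro A hA
        simp only [hJdef] at hA
        by_contra hc
        simp [hc] at hA
    obtain ⟨h'', hFF'', hExt'', hfin''⟩ := hXJ hJ hFFJ
    set h' : Set ℕ → Option Bool := fun A => if h'' A = none then h A else h'' A with h'def
    have hExt2 : ExtFF h'' h' := by
      intro A b hb
      simp [h'def, hb]
    refine ⟨h', ?_, ?_, ?_⟩
    · constructor
      · refine (hFF''.1.union hh.1).subset fun A hA => ?_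
        simp only [h'def, mem_setOf_eq] at hA
        by_cases he : h'' A = none
        · right; simpa [he] using hA
        · left; exact he
      · intro A hA
        simp only [h'def] at hA
        by_cases he : h'' A = none
        · exact hh.2 A (by simpa [he] using hA)
        · exact hJI (hFF''.2 A he)
    · intro A b hb
      by_cases he : h'' A = none
      · simp [h'def, he, hb]
      · obtain ⟨c, hc⟩ := Option.ne_none_iff_exists'.mp he
        have hAinJ : A ∈ J := hFF''.2 A he
        have : hJ A = some b := by simp [hJdef, hAinJ, hb]
        have := hExt'' A b this
        simp [h'def, he, this]
    · exact hfin''.subset (diff_subset_diff_left (BC_anti hExt2))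
end

section
/- Let I be an independent family of subsets of ℕ and X ⊆ ℕ. Then X has infinite intersection with every Boolean combination I^h if and only if there exists a diagonalization filter F for I with X ∈ F. In particular (taking X = ℕ), every independent family admits at least one diagonalization filter. -/
open Set

lemma bc_infinite (I : Set (Set ℕ)) (hI : Indep I) (h : Set ℕ → Option Bool)
    (hh : FF I h) : (BC h).Infinite := by
  obtain ⟨hfin, hmem⟩ := hh
  classical
  set D := hfin.toFinset with hD
  set 𝒜 := D.filter (fun A => h A = some false) with h𝒜
  set ℬ := D.filter (fun A => h A = some true) with hℬ
  have hdisj : Disjoint 𝒜 ℬ := by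
    rw [Finset.disjoint_left]
    intro A hA hB
    simp only [h𝒜, hℬ, Finset.mem_filter] at hA hB
    rw [hA.2] at hB
    exact absurd hB.2 (by simp)
  have h𝒜I : ↑𝒜 ⊆ I := by
    intro A hA
    simp only [h𝒜, Finset.coe_filter, Set.mem_setOf_eq] at hA
    exact hmem A (by simp [hD, Set.Finite.mem_toFinset] at hA; simp [hA.1])
  have hℬI : ↑ℬ ⊆ I := by
    intro A hA
    simp only [hℬ, Finset.coe_filter, Set.mem_setOf_eq] at hA
    exact hmem A (by simp [hD, Set.Finite.mem_toFinset] at hA; simp [hA.1])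
  have hinf := hI.2 𝒜 ℬ h𝒜I hℬI hdisj
  refine hinf.mono ?_
  intro x hx
  simp only [Set.mem_diff, Set.mem_iInter, Set.mem_iUnion, not_exists] at hx
  simp only [BC, Set.mem_iInter, Set.mem_setOf_eq]
  intro A hA
  rcases Option.ne_none_iff_exists'.1 hA with ⟨b, hb⟩
  have hAD : A ∈ D := by simp [hD, Set.Finite.mem_toFinset]; exact hA
  cases b with
  | false =>
    have : A ∈ 𝒜 := by simp [h𝒜, Finset.mem_filter, hAD, hb]
    simp [hb]
    exact hx.1 A this
  | true =>
    have : A ∈ ℬ := by simp [hℬ, Finset.mem_filter, hAD, hb]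
    simp [hb]
    exact hx.2 A this

lemma exists_diag_ext (I : Set (Set ℕ)) (X : Set ℕ)
    (hXne : X.Nonempty) (hX : ∀ h, FF I h → (X ∩ BC h).Infinite) :
    ∃ F, DiagFilter I F ∧ X ∈ F := by
  set F₀ : Set (Set ℕ) := {Y | X ⊆ Y} with hF₀
  have hF₀P : ProperFilter F₀ := by
    refine ⟨?_, ?_, ?_, ?_⟩
    · intro h
      exact absurd (h : X ⊆ ∅) (by intro hsub; exact hXne.ne_empty (Set.subset_empty_iff.1 hsub))
    · exact Set.subset_univ X
    · intro Y hY Z hYZ; exact hY.trans hYZ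
    · intro Y hY Z hZ; exact Set.subset_inter hY hZ
  have hF₀D : DiagProp I F₀ := by
    intro Y hY h hh
    exact (hX h hh).mono (Set.inter_subset_inter_left _ hY)
  set S : Set (Set (Set ℕ)) := {G | ProperFilter G ∧ DiagProp I G ∧ F₀ ⊆ G} with hS
  have hF₀S : F₀ ∈ S := ⟨hF₀P, hF₀D, subset_rfl⟩
  have hchain : ∀ c ⊆ S, IsChain (· ⊆ ·) c → c.Nonempty →
      ∃ ub ∈ S, ∀ s ∈ c, s ⊆ ub := by
    intro c hcS hc ⟨G₀, hG₀⟩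
    refine ⟨⋃₀ c, ⟨⟨?_, ?_, ?_, ?_⟩, ?_, ?_⟩, fun s hs => Set.subset_sUnion_of_mem hs⟩
    · rintro ⟨G, hG, hG'⟩
      exact (hcS hG).1.1 hG'
    · exact ⟨G₀, hG₀, (hcS hG₀).1.2.1⟩
    · rintro Y ⟨G, hG, hY⟩ Z hYZ
      exact ⟨G, hG, (hcS hG).1.2.2.1 Y hY Z hYZ⟩
    · rintro Y ⟨G, hG, hY⟩ Z ⟨G', hG', hZ⟩
      rcases hc.total hG hG' with hle | hle
      · exact ⟨G', hG', (hcS hG').1.2.2.2 Y (hle hY) Z hZ⟩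
      · exact ⟨G, hG, (hcS hG).1.2.2.2 Y hY Z (hle hZ)⟩
    · rintro Y ⟨G, hG, hY⟩ h hh
      exact (hcS hG).2.1 Y hY h hh
    · exact (hcS hG₀).2.2.trans (Set.subset_sUnion_of_mem hG₀)
  obtain ⟨F, hsub, hFmax⟩ := zorn_subset_nonempty S hchain F₀ hF₀S
  have hFS : F ∈ S := hFmax.prop
  refine ⟨F, ⟨hFS.1, hFS.2.1, ?_⟩, hFS.2.2 (show X ⊆ X from subset_rfl)⟩
  intro G hGP hGD hFG
  exact (hFmax.le_of_ge ⟨hGP, hGD, hFS.2.2.trans hFG⟩ hFG).antisymm hFG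

theorem statement7 (I : Set (Set ℕ)) (hI : Indep I) (X : Set ℕ) :
    ((∀ h, FF I h → (X ∩ BC h).Infinite) ↔ ∃ F, DiagFilter I F ∧ X ∈ F) ∧
      ∃ F, DiagFilter I F := by
  have hFFnone : FF I (fun _ => none) := ⟨by simp, by simp⟩
  constructor
  · constructor
    · intro hX
      have hXne : X.Nonempty := by
        have := (hX _ hFFnone).nonempty
        exact this.mono (Set.inter_subset_left)
      exact exists_diag_ext I X hXne hX
    · rintro ⟨F, ⟨_, hdp, _⟩, hX⟩
      exact fun h hh => hdp X hX h hh
  · have huniv : ∀ h, FF I h → ((Set.univ : Set ℕ) ∩ BC h).Infinite := by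
      intro h hh
      simpa using bc_infinite I hI h hh
    obtain ⟨F, hF, _⟩ := exists_diag_ext I Set.univ ⟨0, trivial⟩ huniv
    exact ⟨F, hF⟩
end

section
/- Let I be an independent family of subsets of ℕ, let F be a diagonalization filter for I, and let X ⊆ ℕ with X ∉ F. Then there exist Y ∈ F and h ∈ FF(I) such that X ∩ Y ∩ I^h is finite. -/
open Set

theorem statement8 (I F : Set (Set ℕ)) (hI : Indep I) (hF : DiagFilter I F)
    (X : Set ℕ) (hX : X ∉ F) :
    ∃ Y ∈ F, ∃ h, FF I h ∧ (X ∩ Y ∩ BC h).Finite := by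
  by_contra hcon
  push_neg at hcon
  -- so for all Y ∈ F and h ∈ FF I, X ∩ Y ∩ BC h is infinite
  have hinf : ∀ Y ∈ F, ∀ h, FF I h → (X ∩ Y ∩ BC h).Infinite := by
    intro Y hY h hh
    exact fun hfin => (hcon Y hY h) hh hfin
  obtain ⟨⟨hne, huniv, hup, hcap⟩, hdiag, hmax⟩ := hF
  set G : Set (Set ℕ) := {Z | ∃ Y ∈ F, X ∩ Y ⊆ Z} with hG
  have hffempty : FF I (fun _ => none) := ⟨by simp [Set.finite_empty], by simp⟩
  have hbcempty : BC (fun _ => none) = Set.univ := by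
    simp [BC]
  have hGdiag : DiagProp I G := by
    intro Z hZ h hh
    obtain ⟨Y, hY, hsub⟩ := hZ
    exact (hinf Y hY h hh).mono (Set.inter_subset_inter_left _ hsub)
  have hGproper : ProperFilter G := by
    refine ⟨?_, ⟨Set.univ, huniv, Set.subset_univ _⟩, ?_, ?_⟩
    · intro ⟨Y, hY, hsub⟩
      have := hinf Y hY _ hffempty
      rw [hbcempty, Set.inter_univ] at this
      exact this.nonempty.not_subset_empty hsub
    · rintro Z ⟨Y, hY, hsub⟩ W hZW
      exact ⟨Y, hY, hsub.trans hZW⟩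
    · rintro Z ⟨Y, hY, hsub⟩ W ⟨Y', hY', hsub'⟩
      refine ⟨Y ∩ Y', hcap Y hY Y' hY', ?_⟩
      intro x hx
      exact ⟨hsub ⟨hx.1, hx.2.1⟩, hsub' ⟨hx.1, hx.2.2⟩⟩
  have hFG : F ⊆ G := fun Y hY => ⟨Y, hY, Set.inter_subset_right⟩
  have : G = F := hmax G hGproper hGdiag hFG
  apply hX
  rw [← this]
  exact ⟨Set.univ, huniv, Set.inter_subset_left⟩
end

section
/- Let I be an independent family of subsets of ℕ and let (A_k)_{k<ω} be a sequence of elements of fil(I). If the set { Y ∈ I : Y ⊆* A_k for all k < ω } is infinite, then there exists B ∈ fil(I) with B ⊆* A_k for all k < ω. -/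
open Set

/-!
Enumerate infinitely many `Yₙ ∈ I` almost contained in every `A k` and take the diagonal union
`B = ⋃ n, Yₙ ∩ A₀ ∩ ⋯ ∩ Aₙ`. Only `Y₀, …, Y_{k-1}` can escape the cut by `A k`, so `B ⊆* A k`; and
only finitely many `A k` cut into `Yₙ`, so `Yₙ ⊆* B`. Any finite partial function misses some
`Yₙ` from its domain; extending it by `Yₙ ↦ 0` gives a Boolean combination inside `Yₙ ⊆* B`.
-/

section DiagonalUnion

variable {α : Type*}

def diagonalUnion (Y A : ℕ → Set α) : Set α :=
  ⋃ n, Y n ∩ ⋂ k ≤ n, A k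

theorem diagonalUnion_diff_finite {Y A : ℕ → Set α} (hYA : ∀ n k, (Y n \ A k).Finite) (k : ℕ) :
    (diagonalUnion Y A \ A k).Finite := by
  refine ((finite_Iio k).biUnion fun m _ => hYA m k).subset ?_
  rintro x ⟨hxB, hxA⟩
  obtain ⟨m, hxY, hxA'⟩ := mem_iUnion.mp hxB
  have hmk : m < k := by
    by_contra! hkm
    exact hxA (mem_iInter₂.mp hxA' k hkm)
  exact mem_biUnion hmk ⟨hxY, hxA⟩

theorem diff_diagonalUnion_finite {Y A : ℕ → Set α} (hYA : ∀ n k, (Y n \ A k).Finite) (n : ℕ) :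
    (Y n \ diagonalUnion Y A).Finite := by
  refine ((finite_Iic n).biUnion fun k _ => hYA n k).subset ?_
  rintro x ⟨hxY, hxB⟩
  by_contra hx
  refine hxB (mem_iUnion.mpr ⟨n, hxY, mem_iInter₂.mpr fun k hk => ?_⟩)
  by_contra hxA
  exact hx (mem_biUnion (mem_Iic.mpr hk) ⟨hxY, hxA⟩)

end DiagonalUnion

theorem BC_subset_of_eq_some_false {h : Set ℕ → Option Bool} {Y : Set ℕ}
    (hY : h Y = some false) : BC h ⊆ Y := by
  intro x hx
  simpa [hY] using mem_iInter₂.mp hx Y (by simp [hY])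

theorem FF.update {I : Set (Set ℕ)} {g : Set ℕ → Option Bool} (hg : FF I g) {Y : Set ℕ}
    (hY : Y ∈ I) (b : Bool) : FF I (Function.update g Y (some b)) := by
  have hdom : {A | Function.update g Y (some b) A ≠ none} ⊆ insert Y {A | g A ≠ none} := by
    intro A hA
    by_cases hAY : A = Y
    · exact Or.inl hAY
    · exact Or.inr (by simpa [Function.update_of_ne hAY] using hA)
  refine ⟨(hg.1.insert Y).subset hdom, fun A hA => ?_⟩
  rcases hdom hA with rfl | hA
  · exact hY
  · exact hg.2 A hA

theorem ExtFF.update_of_eq_none {g : Set ℕ → Option Bool} {Y : Set ℕ} (hgY : g Y = none)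
    (b : Bool) : ExtFF g (Function.update g Y (some b)) := by
  intro A c hA
  have hAY : A ≠ Y := by
    rintro rfl
    simp [hgY] at hA
  rwa [Function.update_of_ne hAY]

theorem mem_densityFil_of_infinite {I : Set (Set ℕ)} {X : Set ℕ}
    (hX : {Y ∈ I | (Y \ X).Finite}.Infinite) : X ∈ densityFil I := by
  intro g hg
  obtain ⟨Y, ⟨hYI, hYX⟩, hgY⟩ := (hX.sdiff hg.1).nonempty
  have hgY : g Y = none := not_not.mp hgY
  refine ⟨Function.update g Y (some false), hg.update hYI false,
    ExtFF.update_of_eq_none hgY false, hYX.subset ?_⟩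
  exact sdiff_subset_sdiff_left (BC_subset_of_eq_some_false (by simp))

theorem statement12_general (I : Set (Set ℕ)) (A : ℕ → Set ℕ)
    (h : {Y ∈ I | ∀ k, (Y \ A k).Finite}.Infinite) :
    ∃ B ∈ densityFil I, ∀ k, (B \ A k).Finite := by
  let Y : ℕ → Set ℕ := fun n => h.natEmbedding _ n
  have hY : ∀ n, Y n ∈ I ∧ ∀ k, (Y n \ A k).Finite := fun n => (h.natEmbedding _ n).2
  have hYinj : Function.Injective Y := Subtype.coe_injective.comp (h.natEmbedding _).injective
  have hYA : ∀ n k, (Y n \ A k).Finite := fun n => (hY n).2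
  refine ⟨diagonalUnion Y A, mem_densityFil_of_infinite ?_, diagonalUnion_diff_finite hYA⟩
  refine (infinite_range_of_injective hYinj).mono ?_
  rintro _ ⟨n, rfl⟩
  exact ⟨(hY n).1, diff_diagonalUnion_finite hYA n⟩

theorem statement12 (I : Set (Set ℕ)) (hI : Indep I) (A : ℕ → Set ℕ)
    (hA : ∀ k, A k ∈ densityFil I)
    (h : {Y ∈ I | ∀ k, (Y \ A k).Finite}.Infinite) :
    ∃ B ∈ densityFil I, ∀ k, (B \ A k).Finite :=
  statement12_general I A h
end

section
/- Let F be a proper filter on ℕ containing all cofinite subsets of ℕ. Then F is a Q-filter if and only if for every strictly increasing function f : ℕ → ℕ there is A ∈ F which Q-dominates f, i.e. such that A is infinite and, letting (k(n))_{n<ω} be the increasing enumeration of A, f(k(n)) < k(n+1) for all n. -/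
open Set

/-- An infinite set `A` with increasing enumeration `k(·)` Q-dominates `f` if
`f (k n) < k (n+1)` for all `n`. -/
def QDominates (A : Set ℕ) (f : ℕ → ℕ) : Prop :=
  A.Infinite ∧ ∀ n : ℕ, f (Nat.nth (· ∈ A) n) < Nat.nth (· ∈ A) (n + 1)

namespace Stmt16Aux

/-- Iterated sequence: `seq f 0 = 0`, `seq f (i+1) = f (seq f i) + 1`. -/
def seq (f : ℕ → ℕ) : ℕ → ℕ
  | 0 => 0
  | i + 1 => f (seq f i) + 1

lemma seq_strictMono {f : ℕ → ℕ} (hf : StrictMono f) : StrictMono (seq f) :=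
  strictMono_nat_of_lt_succ fun _ => Nat.lt_succ_of_le hf.le_apply

open Classical in
/-- Index of the interval `[seq f i, seq f (i+1))` containing `k`. -/
noncomputable def idx (f : ℕ → ℕ) (k : ℕ) : ℕ :=
  Nat.findGreatest (fun i => seq f i ≤ k) k

lemma seq_idx_le (f : ℕ → ℕ) (k : ℕ) : seq f (idx f k) ≤ k := by
  classical
  have h0 : (fun i => seq f i ≤ k) 0 := Nat.zero_le k
  have h1 := Nat.findGreatest_spec (P := fun i => seq f i ≤ k) (Nat.zero_le k) h0
  exact h1

lemma lt_seq_idx_succ {f : ℕ → ℕ} (hf : StrictMono f) (k : ℕ) :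
    k < seq f (idx f k + 1) := by
  classical
  by_contra h
  push_neg at h
  have hb : idx f k + 1 ≤ k :=
    le_trans (seq_strictMono hf).le_apply h
  exact Nat.findGreatest_is_greatest (Nat.lt_succ_self _) hb h

end Stmt16Aux

open Stmt16Aux
theorem statement16 (F : Set (Set ℕ)) (hF : ProperFilter F)
    (hcof : ∀ X : Set ℕ, Xᶜ.Finite → X ∈ F) :
    IsQFilter F ↔ ∀ f : ℕ → ℕ, StrictMono f → ∃ A ∈ F, QDominates A f := by
  classical
  have hinf : ∀ X ∈ F, X.Infinite := by
    intro X hX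
    by_contra h
    rw [Set.not_infinite] at h
    have h1 : Xᶜ ∈ F := hcof Xᶜ (by simpa [compl_compl] using h)
    have h2 : X ∩ Xᶜ ∈ F := hF.2.2.2 X hX Xᶜ h1
    rw [Set.inter_compl_self] at h2
    exact hF.1 h2
  constructor
  · -- Q-filter → dominating
    intro hQ f hf
    set s := seq f with hs_def
    have hs : StrictMono s := seq_strictMono hf
    set ι : ℕ → ℕ := fun k => idx f k with hι_def
    have hι1 : ∀ k, s (ι k) ≤ k := fun k => seq_idx_le f k
    have hι2 : ∀ k, k < s (ι k + 1) := fun k => lt_seq_idx_succ hf k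
    set JE : ℕ → Set ℕ := fun m => {k | ι k / 2 = m} with hJE
    set JO : ℕ → Set ℕ := fun m => {k | (ι k + 1) / 2 = m} with hJO
    have hfinE : ∀ m, (JE m).Finite := by
      intro m
      refine (Set.finite_Iio (s (2 * m + 2))).subset ?_
      intro k hk
      have h1 : ι k ≤ 2 * m + 1 := by
        have := hk; simp only [hJE, Set.mem_setOf_eq] at this; omega
      calc k < s (ι k + 1) := hι2 k
        _ ≤ s (2 * m + 2) := hs.monotone (by omega)
    have hfinO : ∀ m, (JO m).Finite := by
      intro m
      refine (Set.finite_Iio (s (2 * m + 1))).subset ?_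
      intro k hk
      have h1 : ι k ≤ 2 * m := by
        have := hk; simp only [hJO, Set.mem_setOf_eq] at this; omega
      calc k < s (ι k + 1) := hι2 k
        _ ≤ s (2 * m + 1) := hs.monotone (by omega)
    have hdisjE : ∀ m n, m ≠ n → Disjoint (JE m) (JE n) := by
      intro m n hmn
      rw [Set.disjoint_left]
      intro k hk hk'
      simp only [hJE, Set.mem_setOf_eq] at hk hk'
      exact hmn (hk ▸ hk')
    have hdisjO : ∀ m n, m ≠ n → Disjoint (JO m) (JO n) := by
      intro m n hmn
      rw [Set.disjoint_left]
      intro k hk hk'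
      simp only [hJO, Set.mem_setOf_eq] at hk hk'
      exact hmn (hk ▸ hk')
    have hcovE : (⋃ m, JE m) = Set.univ :=
      Set.iUnion_eq_univ_iff.2 fun k => ⟨ι k / 2, rfl⟩
    have hcovO : (⋃ m, JO m) = Set.univ :=
      Set.iUnion_eq_univ_iff.2 fun k => ⟨(ι k + 1) / 2, rfl⟩
    obtain ⟨A, hAF, hA⟩ := hQ JE hfinE hdisjE hcovE
    obtain ⟨B, hBF, hB⟩ := hQ JO hfinO hdisjO hcovO
    have hCF : A ∩ B ∈ F := hF.2.2.2 A hAF B hBF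
    have hCinf : (A ∩ B).Infinite := hinf _ hCF
    refine ⟨A ∩ B, hCF, hCinf, fun p => ?_⟩
    set x := Nat.nth (· ∈ A ∩ B) p with hx_def
    set y := Nat.nth (· ∈ A ∩ B) (p + 1) with hy_def
    have hxy : x < y := (Nat.nth_lt_nth hCinf).2 (Nat.lt_succ_self p)
    have hxC : x ∈ A ∩ B := Nat.nth_mem_of_infinite hCinf p
    have hyC : y ∈ A ∩ B := Nat.nth_mem_of_infinite hCinf (p + 1)
    have hij : ι x + 2 ≤ ι y := by
      by_contra h
      push_neg at h
      have hle : ι x ≤ ι y := by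
        by_contra h2
        push_neg at h2
        have : y < x :=
          lt_of_lt_of_le (hι2 y) (le_trans (hs.monotone h2) (hι1 x))
        omega
      have hcase : ι x / 2 = ι y / 2 ∨ (ι x + 1) / 2 = (ι y + 1) / 2 := by omega
      rcases hcase with hc | hc
      · have : x = y :=
          hA (ι x / 2) ⟨hxC.1, rfl⟩ ⟨hyC.1, hc.symm⟩
        omega
      · have : x = y :=
          hB ((ι x + 1) / 2) ⟨hxC.2, rfl⟩ ⟨hyC.2, hc.symm⟩
        omega
    calc f x < f (s (ι x + 1)) := hf (hι2 x)
      _ < s (ι x + 2) := Nat.lt_succ_self _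
      _ ≤ s (ι y) := hs.monotone (by omega)
      _ ≤ y := hι1 y
  · -- dominating → Q-filter
    intro hD J hfin hdisj hcov
    have hmem : ∀ k : ℕ, ∃ m, k ∈ J m := by
      intro k
      have : k ∈ ⋃ n, J n := hcov ▸ Set.mem_univ k
      simpa using this
    choose b hb using hmem
    set M : ℕ → ℕ := fun j => (hfin (b j)).toFinset.sup id with hM_def
    have hM : ∀ j, ∀ y ∈ J (b j), y ≤ M j := by
      intro j y hy
      exact Finset.le_sup (f := id) (by simpa using hy)
    set f : ℕ → ℕ := fun k => (Finset.range (k + 1)).sup M + k + 1 with hf_def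
    have hfmono : StrictMono f := by
      apply strictMono_nat_of_lt_succ
      intro k
      have : (Finset.range (k + 1)).sup M ≤ (Finset.range (k + 1 + 1)).sup M :=
        Finset.sup_mono (Finset.range_subset_range.2 (by omega))
      simp only [hf_def]
      omega
    obtain ⟨A, hAF, hAinf, hAdom⟩ := hD f hfmono
    refine ⟨A, hAF, fun m => ?_⟩
    have claim : ∀ x y : ℕ, x ∈ A → y ∈ A → x ∈ J m → y ∈ J m → x < y → False := by
      intro x y hxA hyA hxJ hyJ hxy
      have hbx : b x = m := by
        by_contra h
        exact Set.disjoint_left.1 (hdisj (b x) m h) (hb x) hxJ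
      have hyM : y ≤ M x := hM x y (by rw [hbx]; exact hyJ)
      have hyf : y < f x := by
        have h1 : M x ≤ (Finset.range (x + 1)).sup M :=
          Finset.le_sup (Finset.mem_range.2 (Nat.lt_succ_self x))
        simp only [hf_def]
        omega
      set n := Nat.count (· ∈ A) x with hn_def
      have hnth : Nat.nth (· ∈ A) n = x := Nat.nth_count hxA
      have hcnt : n + 1 ≤ Nat.count (· ∈ A) y := by
        have h1 : Nat.count (· ∈ A) (x + 1) = n + 1 := by
          rw [Nat.count_succ]; simp [hxA, hn_def]
        have h2 : Nat.count (· ∈ A) (x + 1) ≤ Nat.count (· ∈ A) y :=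
          Nat.count_monotone _ hxy
        omega
      have hnth' : Nat.nth (· ∈ A) (Nat.count (· ∈ A) y) = y := Nat.nth_count hyA
      have h3 : Nat.nth (· ∈ A) (n + 1) ≤ y := by
        rw [← hnth']
        exact (Nat.nth_le_nth hAinf).2 hcnt
      have h4 : f x < Nat.nth (· ∈ A) (n + 1) := by
        rw [← hnth]; exact hAdom n
      omega
    intro x hx y hy
    rcases lt_trichotomy x y with h | h | h
    · exact absurd (claim x y hx.1 hy.1 hx.2 hy.2 h) (not_false)
    · exact h
    · exact absurd (claim y x hy.1 hx.1 hy.2 hx.2 h) (not_false)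
end
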